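/- Let σ be a positive semidefinite matrix and let B be a nonempty, compact, convex set of positive semidefinite matrices with trace ≤ 1. Regarding the (nonnegative real) traces as elements of the extended nonnegative reals [0,∞], one has inf over ρ̃ ∈ B of ( sup { tr(M·ρ̃) : M positive semidefinite with tr(Mσ) ≤ 1 } ) = sup over M positive semidefinite with tr(Mσ) ≤ 1 of ( inf over ρ̃ ∈ B of tr(M·ρ̃) ), i.e. the infimum over B and the supremum over M can be interchanged. -/

import Mathlib

open scoped Classical ComplexOrder Kronecker
open Matrix

noncomputable section

variable {n : Type*} [Fintype n] [DecidableEq n]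

/-- Real part of the trace. -/
def rtr (A : Matrix n n ℂ) : ℝ := (A.trace).re

/-- Löwner order: `loewnerLE A B` iff `B - A` is positive semidefinite. -/
def loewnerLE (A B : Matrix n n ℂ) : Prop := (B - A).PosSemidef

/-- Positive semidefinite square root of a PSD matrix (junk value `0` otherwise). -/
def msqrt (A : Matrix n n ℂ) : Matrix n n ℂ :=
  if h : A.PosSemidef then
    (h.1.eigenvectorUnitary : Matrix n n ℂ) *
      Matrix.diagonal (fun i => ((Real.sqrt (h.1.eigenvalues i) : ℝ) : ℂ)) *
      (star (h.1.eigenvectorUnitary : Matrix n n ℂ))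
  else 0

/-- Trace norm `‖A‖₁ = tr √(Aᴴ A)`. -/
def traceNorm (A : Matrix n n ℂ) : ℝ :=
  rtr (((Matrix.posSemidef_conjTranspose_mul_self A).1.eigenvectorUnitary : Matrix n n ℂ) *
      Matrix.diagonal (fun i => ((Real.sqrt
        ((Matrix.posSemidef_conjTranspose_mul_self A).1.eigenvalues i) : ℝ) : ℂ)) *
      (star ((Matrix.posSemidef_conjTranspose_mul_self A).1.eigenvectorUnitary : Matrix n n ℂ)))

/-- Generalized fidelity for sub-normalized states. -/
def genFid (ρ σ : Matrix n n ℂ) : ℝ :=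
  (traceNorm (msqrt ρ * msqrt σ) + Real.sqrt ((1 - rtr ρ) * (1 - rtr σ))) ^ 2

/-- Purified distance. -/
def purDist (ρ σ : Matrix n n ℂ) : ℝ := Real.sqrt (1 - genFid ρ σ)

/-- Trace distance. -/
def traceDist (ρ σ : Matrix n n ℂ) : ℝ := traceNorm (ρ - σ) / 2

/-- Max-divergence `D_max(ρ‖σ) = inf {λ : ρ ≤ 2^λ σ}` (Löwner order). -/
def Dmax (ρ σ : Matrix n n ℂ) : ℝ :=
  sInf {lam : ℝ | loewnerLE ρ (((2 : ℝ) ^ lam) • σ)}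

/-- Smoothed max-divergence with purified-distance smoothing over sub-normalized states. -/
def DmaxSmoothP (ε : ℝ) (ρ σ : Matrix n n ℂ) : ℝ :=
  sInf {d : ℝ | ∃ ρ' : Matrix n n ℂ,
    ρ'.PosSemidef ∧ rtr ρ' ≤ 1 ∧ purDist ρ ρ' ≤ ε ∧ d = Dmax ρ' σ}

/-- Hypothesis testing divergence
`D_h^ε(ρ‖σ) = -log sup {tr (Λ σ) : 0 ≤ Λ ≤ 1, tr (Λ ρ) ≥ 1 - ε}`. -/
def Dh (ε : ℝ) (ρ σ : Matrix n n ℂ) : ℝ :=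
  - Real.logb 2 (sSup {x : ℝ | ∃ L : Matrix n n ℂ,
      L.PosSemidef ∧ loewnerLE L 1 ∧ 1 - ε ≤ rtr (L * ρ) ∧ x = rtr (L * σ)})

/-- Real power of a Hermitian matrix, defined spectrally (junk value `0` if not Hermitian). -/
def hpow (A : Matrix n n ℂ) (t : ℝ) : Matrix n n ℂ :=
  if h : A.IsHermitian then
    (h.eigenvectorUnitary : Matrix n n ℂ) *
      Matrix.diagonal (fun i => ((h.eigenvalues i ^ t : ℝ) : ℂ)) *
      (star (h.eigenvectorUnitary : Matrix n n ℂ))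
  else 0

/-- Sandwiched Rényi divergence of order `α`. -/
def sandwichedRenyi (α : ℝ) (ρ σ : Matrix n n ℂ) : ℝ :=
  (1 / (α - 1)) * Real.logb 2
    (rtr (hpow (hpow σ ((1 - α) / (2 * α)) * ρ * hpow σ ((1 - α) / (2 * α))) α) / rtr ρ)

/-- Marginal (partial trace) on the first factor. -/
def margA {A B : Type*} [Fintype A] [Fintype B] (ρ : Matrix (A × B) (A × B) ℂ) :
    Matrix A A ℂ :=
  Matrix.of fun a a' => ∑ b : B, ρ (a, b) (a', b)

/-- Marginal (partial trace) on the second factor. -/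
def margB {A B : Type*} [Fintype A] [Fintype B] (ρ : Matrix (A × B) (A × B) ℂ) :
    Matrix B B ℂ :=
  Matrix.of fun b b' => ∑ a : A, ρ (a, b) (a, b')

end

/-! `sup inf ≤ inf sup` holds in any complete lattice. Conversely, suppose every `ρ ∈ B` admits
an admissible `M` with `tr (M ρ) > c`. By compactness of `B` finitely many `M₁, …, Mₖ` suffice, so
the image of `B` under `ρ ↦ (tr (Mᵢ ρ))ᵢ` is a compact convex subset of `ℝᵏ` disjoint from the
orthant `{x | x ≤ c}`. A Hahn–Banach hyperplane separating the two has a nonnegative normal `w`,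
because the orthant is a lower set; normalising `w` to the standard simplex, the convex combination
`∑ wᵢ Mᵢ` is admissible and satisfies `tr (M ρ) > c` uniformly on `B`. -/

theorem StrongDual.apply_eq_dotProduct {ι : Type*} [Fintype ι] [DecidableEq ι]
    (f : StrongDual ℝ (ι → ℝ)) (x : ι → ℝ) : f x = (fun i => f (Pi.single i 1)) ⬝ᵥ x := by
  conv_lhs => rw [← Finset.univ_sum_single x]
  refine (map_sum f _ _).trans (Finset.sum_congr rfl fun i _ => ?_)
  rw [mul_comm, ← smul_eq_mul, ← map_smul, ← Pi.single_smul', smul_eq_mul, mul_one]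

theorem exists_mem_stdSimplex_forall_lt_dotProduct {ι : Type*} [Fintype ι] {C : Set (ι → ℝ)}
    (hne : C.Nonempty) (hcomp : IsCompact C) (hconv : Convex ℝ C) {c : ℝ}
    (h : ∀ x ∈ C, ∃ i, c < x i) :
    ∃ w ∈ stdSimplex ℝ ι, ∀ x ∈ C, c < w ⬝ᵥ x := by
  set cc : ι → ℝ := Function.const ι c
  have hcc : cc ∈ Set.Iic cc := Set.mem_Iic.2 le_rfl
  have hdisj : Disjoint (Set.Iic cc) C := by
    refine Set.disjoint_right.2 fun x hx hxc => ?_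
    obtain ⟨i, hi⟩ := h x hx
    exact (hxc i).not_gt hi
  obtain ⟨f, u, v, hfD, huv, hfC⟩ :=
    geometric_hahn_banach_closed_compact (convex_Iic cc) isClosed_Iic hconv hcomp hdisj
  set g : ι → ℝ := fun i => f (Pi.single i 1)
  have hf : ∀ x, f x = g ⬝ᵥ x := f.apply_eq_dotProduct
  -- `f < u` on the lower set `Iic cc`, which contains the ray `cc - t • eᵢ`, `t ≥ 0`
  have hg : ∀ i, 0 ≤ g i := by
    intro i
    have hray : ∀ t : ℝ, 0 ≤ t → f cc - t * g i < u := fun t ht => by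
      have hmem : cc - t • Pi.single i 1 ∈ Set.Iic cc :=
        Set.mem_Iic.2 <| sub_le_self _ (smul_nonneg ht (Pi.single_nonneg.2 zero_le_one))
      simpa [g] using hfD _ hmem
    by_contra! hgi
    have := hray ((u - f cc) / -g i) (div_nonneg (by linarith [hfD cc hcc]) (by linarith))
    rw [div_mul_eq_mul_div, div_neg, mul_div_assoc, div_self hgi.ne] at this
    linarith
  have hsep : ∀ x ∈ C, c * ∑ i, g i < g ⬝ᵥ x := fun x hx => by
    have hgcc : g ⬝ᵥ cc = c * ∑ i, g i := by simp [cc, dotProduct, Finset.mul_sum, mul_comm]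
    linarith [hf x, hf cc, hfC x hx, hfD cc hcc]
  have hg0 : g ≠ 0 := by
    rintro hg0
    obtain ⟨x₀, hx₀⟩ := hne
    have hfx₀ := hfC x₀ hx₀
    have hfcc := hfD cc hcc
    rw [hf, hg0, zero_dotProduct] at hfx₀ hfcc
    linarith
  have hs : 0 < ∑ i, g i := by
    obtain ⟨i, hi⟩ := Function.ne_iff.1 hg0
    exact Finset.sum_pos' (fun i _ => hg i) ⟨i, Finset.mem_univ i, (hg i).lt_of_ne' hi⟩
  refine ⟨(∑ i, g i)⁻¹ • g, ⟨fun i => ?_, ?_⟩, fun x hx => ?_⟩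
  · exact mul_nonneg (inv_nonneg.2 hs.le) (hg i)
  · simp [← Finset.mul_sum, hs.ne']
  · rw [smul_dotProduct, smul_eq_mul, lt_inv_mul_iff₀ hs, mul_comm]
    exact hsep x hx

theorem exists_forall_lt_of_forall_exists_lt {E F : Type*} [AddCommGroup E] [Module ℝ E]
    [TopologicalSpace E] [AddCommGroup F] [Module ℝ F]
    (φ : F →ₗ[ℝ] E →ₗ[ℝ] ℝ) (hφ : ∀ M, Continuous (φ M)) {K : Set F} (hK : Convex ℝ K)
    {B : Set E} (hne : B.Nonempty) (hcomp : IsCompact B) (hconv : Convex ℝ B) {c : ℝ}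
    (h : ∀ ρ ∈ B, ∃ M ∈ K, c < φ M ρ) :
    ∃ M ∈ K, ∀ ρ ∈ B, c < φ M ρ := by
  obtain ⟨t, ht⟩ := hcomp.elim_finite_subcover (fun M : K => {ρ | c < φ M ρ})
    (fun M => isOpen_lt continuous_const (hφ M)) fun ρ hρ => by
      obtain ⟨M, hM, hlt⟩ := h ρ hρ
      exact Set.mem_iUnion.2 ⟨⟨M, hM⟩, hlt⟩
  let T : E →ₗ[ℝ] t → ℝ := LinearMap.pi fun M => φ M
  have hT : Continuous T := continuous_pi fun M => hφ M
  obtain ⟨w, ⟨hw₀, hw₁⟩, hw⟩ := exists_mem_stdSimplex_forall_lt_dotProduct (hne.image T)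
    (hcomp.image hT) (hconv.linear_image T) <| by
      rintro _ ⟨ρ, hρ, rfl⟩
      obtain ⟨M, hM, hlt⟩ := Set.mem_iUnion₂.1 (ht hρ)
      exact ⟨⟨M, hM⟩, hlt⟩
  refine ⟨∑ M : t, w M • (M : F), hK.sum_mem (fun M _ => hw₀ M) hw₁ fun M _ => M.1.2,
    fun ρ hρ => ?_⟩
  simpa [dotProduct, T] using hw (T ρ) ⟨ρ, hρ, rfl⟩

theorem Matrix.convex_setOf_posSemidef {m 𝕜 : Type*} [Fintype m] [RCLike 𝕜] :
    Convex ℝ {M : Matrix m m 𝕜 | M.PosSemidef} :=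
  fun _ hM _ hN _ _ ha hb _ => (hM.smul ha).add (hN.smul hb)

section rtrMul

variable {n : Type*} [Fintype n]

noncomputable def rtrMul : Matrix n n ℂ →ₗ[ℝ] Matrix n n ℂ →ₗ[ℝ] ℝ :=
  (LinearMap.mul ℝ (Matrix n n ℂ)).compr₂ (Complex.reLm ∘ₗ traceLinearMap n ℝ ℂ)

theorem continuous_rtrMul (M : Matrix n n ℂ) : Continuous (rtrMul M) :=
  Complex.continuous_re.comp (continuous_const.matrix_mul continuous_id).matrix_trace

theorem convex_setOf_posSemidef_rtr_mul_le (σ : Matrix n n ℂ) (r : ℝ) :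
    Convex ℝ {M : Matrix n n ℂ | M.PosSemidef ∧ rtr (M * σ) ≤ r} :=
  Matrix.convex_setOf_posSemidef.inter (convex_halfSpace_le (rtrMul.flip σ).isLinear r)

end rtrMul

theorem minimax_smoothing_general
    {n : Type*} [Fintype n]
    (σ : Matrix n n ℂ)
    (B : Set (Matrix n n ℂ)) (hne : B.Nonempty) (hcomp : IsCompact B) (hconv : Convex ℝ B) :
    (⨅ ρ' ∈ B, ⨆ M : Matrix n n ℂ, ⨆ _ : M.PosSemidef ∧ rtr (M * σ) ≤ 1,
        ENNReal.ofReal (rtr (M * ρ')))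
      = ⨆ M : Matrix n n ℂ, ⨆ _ : M.PosSemidef ∧ rtr (M * σ) ≤ 1,
          ⨅ ρ' ∈ B, ENNReal.ofReal (rtr (M * ρ')) := by
  refine le_antisymm (le_of_forall_lt_imp_le_of_dense fun r hr => ?_)
    (le_iInf₂ fun ρ hρ => iSup₂_le fun M hM => (iInf₂_le ρ hρ).trans (le_iSup₂_of_le M hM le_rfl))
  have hpointwise : ∀ ρ ∈ B, ∃ M ∈ {M : Matrix n n ℂ | M.PosSemidef ∧ rtr (M * σ) ≤ 1},
      r.toReal < rtr (M * ρ) := fun ρ hρ => by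
    obtain ⟨M, hM⟩ := lt_iSup_iff.1 (hr.trans_le (iInf₂_le ρ hρ))
    obtain ⟨hM, hlt⟩ := lt_iSup_iff.1 hM
    exact ⟨M, hM, ENNReal.toReal_lt_of_lt_ofReal hlt⟩
  obtain ⟨M, hM, huniform⟩ := exists_forall_lt_of_forall_exists_lt rtrMul continuous_rtrMul
    (convex_setOf_posSemidef_rtr_mul_le σ 1) hne hcomp hconv hpointwise
  refine le_iSup₂_of_le M hM (le_iInf₂ fun ρ hρ => ?_)
  rw [← ENNReal.ofReal_toReal hr.ne_top]
  exact ENNReal.ofReal_le_ofReal (huniform ρ hρ).le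

/-- Minimax interchange for smoothing over a nonempty compact convex
set `B` of sub-normalized states, with the traces regarded in `[0,∞]`. -/
theorem minimax_smoothing
    {n : Type*} [Fintype n] [DecidableEq n] [Nonempty n]
    (σ : Matrix n n ℂ) (hσ : σ.PosSemidef)
    (B : Set (Matrix n n ℂ)) (hne : B.Nonempty) (hcomp : IsCompact B) (hconv : Convex ℝ B)
    (hB : ∀ ρ' ∈ B, ρ'.PosSemidef ∧ rtr ρ' ≤ 1) :
    (⨅ ρ' ∈ B, ⨆ M : Matrix n n ℂ, ⨆ _ : M.PosSemidef ∧ rtr (M * σ) ≤ 1,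
        ENNReal.ofReal (rtr (M * ρ')))
      = ⨆ M : Matrix n n ℂ, ⨆ _ : M.PosSemidef ∧ rtr (M * σ) ≤ 1,
          ⨅ ρ' ∈ B, ENNReal.ofReal (rtr (M * ρ')) :=
  minimax_smoothing_general σ B hne hcomp hconv
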